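/- (Stability of the ANIL inner loop under strong convexity.) Let L_S : ℝ^{n_w} × ℝ^{n_φ} → ℝ be differentiable with ∇L_S L-Lipschitz jointly in (w,φ) (L > 0), and suppose that for every φ the function w ↦ L_S(w,φ) is μ-strongly convex (μ > 0). Let 0 < α < 2μ/L², so that 0 < 1 − 2αμ + α²L² < 1. For an initialization (w,φ) define the inner-loop path w_0(w,φ) = w, w_{m+1}(w,φ) = w_m(w,φ) − α∇_w L_S(w_m(w,φ), φ). Then for every t ≥ 0 and any two points (w₁,φ₁), (w₂,φ₂), ‖w_t(w₁,φ₁) − w_t(w₂,φ₂)‖ ≤ (1 − 2αμ + α²L²)^{t/2}·‖w₁ − w₂‖ + αL·‖φ₁ − φ₂‖ / (1 − √(1 − 2αμ + α²L²)). -/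
import Mathlib
set_option maxHeartbeats 1000000


open scoped RealInnerProductSpace

noncomputable section

abbrev Euc (n : ℕ) : Type := EuclideanSpace ℝ (Fin n)

variable {nw nf : ℕ}

/-- The partial gradient `∇_w h(w,φ)`. -/
noncomputable def gradW (h : Euc nw × Euc nf → ℝ) (w : Euc nw) (φ : Euc nf) : Euc nw :=
  gradient (fun w' => h (w', φ)) w

/-- The partial gradient `∇_φ h(w,φ)`. -/
noncomputable def gradPh (h : Euc nw × Euc nf → ℝ) (w : Euc nw) (φ : Euc nf) : Euc nf :=
  gradient (fun φ' => h (w, φ')) φ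

/-- The Hessian `∇²_w h(w,φ)` of `w ↦ h(w,φ)`, as a continuous linear map. -/
noncomputable def hessW (h : Euc nw × Euc nf → ℝ) (w : Euc nw) (φ : Euc nf) :
    Euc nw →L[ℝ] Euc nw :=
  fderiv ℝ (fun w' => gradW h w' φ) w

/-- The Fréchet derivative in `φ` of `φ ↦ ∇_w h(w,φ)`; the paper's mixed second
derivative matrix `∇_φ∇_w h(w,φ)` is its adjoint. -/
noncomputable def mixPW (h : Euc nw × Euc nf → ℝ) (w : Euc nw) (φ : Euc nf) :
    Euc nf →L[ℝ] Euc nw :=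
  fderiv ℝ (fun φ' => gradW h w φ') φ

/-- Lemma: stability of the ANIL inner loop under a strongly convex
inner-loop loss.  The joint Lipschitzness of `∇L_S` is expressed via the pair of
partial gradients and the `ℓ²` norm on the product space. -/
theorem anil_inner_loop_stability (nw nf : ℕ) (LS : Euc nw × Euc nf → ℝ)
    (L μ α : ℝ) (hL : 0 < L) (hμ : 0 < μ)
    (hdiff : Differentiable ℝ LS)
    (hLip : ∀ (w w' : Euc nw) (φ φ' : Euc nf),
      Real.sqrt (‖gradW LS w φ - gradW LS w' φ'‖ ^ 2 + ‖gradPh LS w φ - gradPh LS w' φ'‖ ^ 2)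
        ≤ L * Real.sqrt (‖w - w'‖ ^ 2 + ‖φ - φ'‖ ^ 2))
    (hsc : ∀ (φ : Euc nf) (w w' : Euc nw),
      LS (w, φ) + ⟪gradW LS w φ, w' - w⟫ + μ / 2 * ‖w' - w‖ ^ 2 ≤ LS (w', φ))
    (hα0 : 0 < α) (hα : α < 2 * μ / L ^ 2)
    (hbase0 : 0 < 1 - 2 * α * μ + α ^ 2 * L ^ 2)
    (hbase1 : 1 - 2 * α * μ + α ^ 2 * L ^ 2 < 1)
    (wpath : Euc nw → Euc nf → ℕ → Euc nw)
    (h0 : ∀ w φ, wpath w φ 0 = w)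
    (hrec : ∀ w φ m, wpath w φ (m + 1) = wpath w φ m - α • gradW LS (wpath w φ m) φ) :
    ∀ (t : ℕ) (w₁ w₂ : Euc nw) (φ₁ φ₂ : Euc nf),
      ‖wpath w₁ φ₁ t - wpath w₂ φ₂ t‖
        ≤ (1 - 2 * α * μ + α ^ 2 * L ^ 2) ^ ((t : ℝ) / 2) * ‖w₁ - w₂‖
          + α * L * ‖φ₁ - φ₂‖ / (1 - Real.sqrt (1 - 2 * α * μ + α ^ 2 * L ^ 2)) := by

  intro t
  induction t with
  | zero =>
    intro w₁ w₂ φ₁ φ₂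
    have hρ1 : Real.sqrt (1 - 2 * α * μ + α ^ 2 * L ^ 2) < 1 := by
      nlinarith [Real.sq_sqrt hbase0.le, Real.sqrt_nonneg (1 - 2 * α * μ + α ^ 2 * L ^ 2)]
    have hpos : 0 < 1 - Real.sqrt (1 - 2 * α * μ + α ^ 2 * L ^ 2) := by linarith
    simp only [h0, Nat.cast_zero, zero_div, Real.rpow_zero, one_mul]
    have : 0 ≤ α * L * ‖φ₁ - φ₂‖ / (1 - Real.sqrt (1 - 2 * α * μ + α ^ 2 * L ^ 2)) := by
      apply div_nonneg _ hpos.le; positivity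
    linarith
  | succ t ih =>
    intro w₁ w₂ φ₁ φ₂
    set b := 1 - 2 * α * μ + α ^ 2 * L ^ 2 with hb
    set ρ := Real.sqrt b with hρ
    have hρ0 : 0 ≤ ρ := Real.sqrt_nonneg _
    have hρ1 : ρ < 1 := by
      nlinarith [Real.sq_sqrt hbase0.le, Real.sqrt_nonneg b]
    have hpos : 0 < 1 - ρ := by linarith
    set x := wpath w₁ φ₁ t with hx
    set y := wpath w₂ φ₂ t with hy
    set A := ‖w₁ - w₂‖ with hA
    set C := α * L * ‖φ₁ - φ₂‖ with hC
    have hC0 : 0 ≤ C := by rw [hC]; positivity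
    -- Lipschitz in w at fixed φ
    have hLw : ∀ (w w' : Euc nw) (φ : Euc nf),
        ‖gradW LS w φ - gradW LS w' φ‖ ≤ L * ‖w - w'‖ := by
      intro w w' φ
      have h := hLip w w' φ φ
      simp only [sub_self, norm_zero] at h
      have step1 : ‖gradW LS w φ - gradW LS w' φ‖
          ≤ Real.sqrt (‖gradW LS w φ - gradW LS w' φ‖ ^ 2
              + ‖gradPh LS w φ - gradPh LS w' φ‖ ^ 2) := by
        rw [show ‖gradW LS w φ - gradW LS w' φ‖
            = Real.sqrt (‖gradW LS w φ - gradW LS w' φ‖ ^ 2) by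
          rw [Real.sqrt_sq (norm_nonneg _)]]
        apply Real.sqrt_le_sqrt
        nlinarith [sq_nonneg ‖gradPh LS w φ - gradPh LS w' φ‖,
          Real.sq_sqrt (by positivity : (0:ℝ) ≤ ‖gradW LS w φ - gradW LS w' φ‖ ^ 2),
          Real.sqrt_nonneg (‖gradW LS w φ - gradW LS w' φ‖ ^ 2)]
      have step2 : L * Real.sqrt (‖w - w'‖ ^ 2 + (0:ℝ) ^ 2) = L * ‖w - w'‖ := by
        rw [show ((0:ℝ) ^ 2) = 0 by ring, add_zero, Real.sqrt_sq (norm_nonneg _)]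
      linarith [step1, h, step2.le, step2.ge]
    -- Lipschitz in φ at fixed w
    have hLf : ∀ (w : Euc nw) (φ φ' : Euc nf),
        ‖gradW LS w φ - gradW LS w φ'‖ ≤ L * ‖φ - φ'‖ := by
      intro w φ φ'
      have h := hLip w w φ φ'
      simp only [sub_self, norm_zero] at h
      have step1 : ‖gradW LS w φ - gradW LS w φ'‖
          ≤ Real.sqrt (‖gradW LS w φ - gradW LS w φ'‖ ^ 2
              + ‖gradPh LS w φ - gradPh LS w φ'‖ ^ 2) := by
        rw [show ‖gradW LS w φ - gradW LS w φ'‖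
            = Real.sqrt (‖gradW LS w φ - gradW LS w φ'‖ ^ 2) by
          rw [Real.sqrt_sq (norm_nonneg _)]]
        apply Real.sqrt_le_sqrt
        nlinarith [sq_nonneg ‖gradPh LS w φ - gradPh LS w φ'‖,
          Real.sq_sqrt (by positivity : (0:ℝ) ≤ ‖gradW LS w φ - gradW LS w φ'‖ ^ 2),
          Real.sqrt_nonneg (‖gradW LS w φ - gradW LS w φ'‖ ^ 2)]
      have step2 : L * Real.sqrt ((0:ℝ) ^ 2 + ‖φ - φ'‖ ^ 2) = L * ‖φ - φ'‖ := by
        rw [show ((0:ℝ) ^ 2) = 0 by ring, zero_add, Real.sqrt_sq (norm_nonneg _)]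
      linarith [step1, h, step2.le, step2.ge]
    -- strong monotonicity of the partial gradient
    have hmono : ∀ (φ : Euc nf) (w w' : Euc nw),
        μ * ‖w - w'‖ ^ 2 ≤ ⟪w - w', gradW LS w φ - gradW LS w' φ⟫ := by
      intro φ w w'
      have h1 := hsc φ w w'
      have h2 := hsc φ w' w
      have e1 : ⟪gradW LS w φ, w' - w⟫ = - ⟪w - w', gradW LS w φ⟫ := by
        rw [show w' - w = -(w - w') by abel, inner_neg_right, real_inner_comm]
      have e2 : ⟪gradW LS w' φ, w - w'⟫ = ⟪w - w', gradW LS w' φ⟫ := real_inner_comm _ _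
      have e3 : ‖w' - w‖ = ‖w - w'‖ := by rw [← neg_sub, norm_neg]
      rw [inner_sub_right]
      rw [e1, e3] at h1; rw [e2] at h2
      linarith
    -- one-step contraction in w, fixed φ
    have hcontr : ∀ (φ : Euc nf) (w w' : Euc nw),
        ‖(w - α • gradW LS w φ) - (w' - α • gradW LS w' φ)‖ ≤ ρ * ‖w - w'‖ := by
      intro φ w w'
      have key : ‖(w - α • gradW LS w φ) - (w' - α • gradW LS w' φ)‖ ^ 2 ≤ b * ‖w - w'‖ ^ 2 := by
        have e : (w - α • gradW LS w φ) - (w' - α • gradW LS w' φ)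
            = (w - w') - α • (gradW LS w φ - gradW LS w' φ) := by
          rw [smul_sub]; abel
        rw [e]
        have expand := @norm_sub_sq_real (Euc nw) _ _ (w - w')
          (α • (gradW LS w φ - gradW LS w' φ))
        have hin : ⟪w - w', α • (gradW LS w φ - gradW LS w' φ)⟫
            = α * ⟪w - w', gradW LS w φ - gradW LS w' φ⟫ := real_inner_smul_right _ _ _
        have hns : ‖α • (gradW LS w φ - gradW LS w' φ)‖
            = α * ‖gradW LS w φ - gradW LS w' φ‖ := by
          rw [norm_smul, Real.norm_eq_abs, abs_of_pos hα0]
        have hm := hmono φ w w'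
        have hl := hLw w w' φ
        rw [expand, hin, hns, hb]
        have hg0 : 0 ≤ ‖gradW LS w φ - gradW LS w' φ‖ := norm_nonneg _
        nlinarith [mul_le_mul_of_nonneg_left hm hα0.le,
          mul_le_mul_of_nonneg_left (pow_le_pow_left₀ hg0 hl 2) (sq_nonneg α)]
      calc ‖(w - α • gradW LS w φ) - (w' - α • gradW LS w' φ)‖
          = Real.sqrt (‖(w - α • gradW LS w φ) - (w' - α • gradW LS w' φ)‖ ^ 2) := by
            rw [Real.sqrt_sq (norm_nonneg _)]
        _ ≤ Real.sqrt (b * ‖w - w'‖ ^ 2) := Real.sqrt_le_sqrt key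
        _ = ρ * ‖w - w'‖ := by
            rw [Real.sqrt_mul hbase0.le, Real.sqrt_sq (norm_nonneg _)]
    -- one step bound
    have step : ‖wpath w₁ φ₁ (t + 1) - wpath w₂ φ₂ (t + 1)‖ ≤ ρ * ‖x - y‖ + C := by
      rw [hrec, hrec, ← hx, ← hy]
      have e : (x - α • gradW LS x φ₁) - (y - α • gradW LS y φ₂)
          = ((x - α • gradW LS x φ₁) - (y - α • gradW LS y φ₁))
            + (α • gradW LS y φ₂ - α • gradW LS y φ₁) := by abel
      have tri : ‖(x - α • gradW LS x φ₁) - (y - α • gradW LS y φ₂)‖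
          ≤ ‖(x - α • gradW LS x φ₁) - (y - α • gradW LS y φ₁)‖
            + ‖α • gradW LS y φ₂ - α • gradW LS y φ₁‖ := by
        rw [e]; exact norm_add_le _ _
      have h2 : ‖α • gradW LS y φ₂ - α • gradW LS y φ₁‖ ≤ C := by
        rw [← smul_sub, norm_smul, Real.norm_eq_abs, abs_of_pos hα0, hC, mul_assoc]
        refine mul_le_mul_of_nonneg_left ?_ hα0.le
        have := hLf y φ₂ φ₁
        rwa [norm_sub_rev φ₂ φ₁] at this
      have h1 := hcontr φ₁ x y
      linarith
    -- rpow in terms of powers of ρ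
    have hrp : ∀ (n : ℕ), b ^ ((n : ℝ) / 2) = ρ ^ n := by
      intro n
      rw [show ((n : ℝ) / 2) = (1 / 2) * (n : ℝ) by ring, Real.rpow_mul hbase0.le,
        Real.rpow_natCast, hρ, Real.sqrt_eq_rpow]
    have ihb : ‖x - y‖ ≤ ρ ^ t * A + C / (1 - ρ) := by
      have := ih w₁ w₂ φ₁ φ₂
      rwa [hrp t] at this
    rw [hrp (t + 1)]
    have A0 : 0 ≤ ‖x - y‖ := norm_nonneg _
    calc ‖wpath w₁ φ₁ (t + 1) - wpath w₂ φ₂ (t + 1)‖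
        ≤ ρ * ‖x - y‖ + C := step
      _ ≤ ρ * (ρ ^ t * A + C / (1 - ρ)) + C := by nlinarith
      _ = ρ ^ (t + 1) * A + C / (1 - ρ) := by
          field_simp
          ring
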